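/- Let D be an integral domain with quotient field K, T an overring of D, ⋆ a semistar operation on D, and ⋆' a semistar operation on T which is a (semi)star operation, i.e. T^{⋆'} = T. If T is (⋆,⋆')-linked to D, then T^{ℓ_{⋆,T}} = T. -/

import Mathlib

open Pointwise

/-! Basic framework for semistar operations on an integral domain `D`
with quotient field `K`. Submodules of `K` play the role of the
`D`-submodules of the quotient field. -/

section Generic

variable (R : Type*) (K : Type*) [CommRing R] [Field K] [Algebra R K]

/-- A semistar operation on `R` (with ambient field `K`): a map on the nonzero
`R`-submodules of `K` satisfying (⋆₁), (⋆₂), (⋆₃). The map is total on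
`Submodule R K`, but the axioms are only imposed on nonzero submodules. -/
structure SemistarOp where
  toFun : Submodule R K → Submodule R K
  smul' : ∀ x : K, x ≠ 0 → ∀ E : Submodule R K, E ≠ ⊥ → toFun (x • E) = x • toFun E
  mono' : ∀ E F : Submodule R K, E ≠ ⊥ → F ≠ ⊥ → E ≤ F → toFun E ≤ toFun F
  le_star' : ∀ E : Submodule R K, E ≠ ⊥ → E ≤ toFun E
  idem' : ∀ E : Submodule R K, E ≠ ⊥ → toFun (toFun E) = toFun E

variable {R K}

/-- The `R`-submodule of `K` generated by (the image of) an ideal of `R`. -/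
def idealSub (I : Ideal R) : Submodule R K := Submodule.map (Algebra.linearMap R K) I

/-- The finite-type operation `⋆_f` associated to (the function underlying) a semistar
operation: `E^{⋆_f} = ∪ { F^⋆ : F nonzero finitely generated, F ⊆ E }`. -/
def starF (f : Submodule R K → Submodule R K) (E : Submodule R K) : Submodule R K :=
  sSup {G | ∃ F : Submodule R K, F.FG ∧ F ≠ ⊥ ∧ F ≤ E ∧ G = f F}

/-- `I` is a quasi-⋆-ideal: `I ≠ 0` and `I^⋆ ∩ R = I`. -/
def QuasiIdeal (f : Submodule R K → Submodule R K) (I : Ideal R) : Prop :=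
  I ≠ ⊥ ∧ Submodule.comap (Algebra.linearMap R K) (f (idealSub I)) = I

/-- `I` is a quasi-⋆-prime: a prime quasi-⋆-ideal. -/
def QuasiPrime (f : Submodule R K → Submodule R K) (I : Ideal R) : Prop :=
  QuasiIdeal f I ∧ I.IsPrime

/-- `I` is a quasi-⋆-maximal: maximal among proper quasi-⋆-ideals. -/
def QuasiMax (f : Submodule R K → Submodule R K) (I : Ideal R) : Prop :=
  QuasiIdeal f I ∧ I ≠ ⊤ ∧ ∀ J : Ideal R, QuasiIdeal f J → J ≠ ⊤ → I ≤ J → I = J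

/-- The localization `E·R_Q` of a submodule `E` of `K` at (the complement of) `Q`:
for prime `Q` this is `{x ∈ K : s·x ∈ E for some s ∉ Q}`. -/
def locSub (Q : Ideal R) (E : Submodule R K) : Submodule R K :=
  Submodule.span R {x : K | ∃ s : R, s ∉ Q ∧ algebraMap R K s * x ∈ E}

/-- The spectral semistar operation `⋆̃` associated to `⋆`:
`E^{⋆̃} = ∩ { E R_Q : Q quasi-⋆_f-maximal }` (equal to `K` if there are none). -/
def tildeOp (f : Submodule R K → Submodule R K) (E : Submodule R K) : Submodule R K :=
  ⨅ (Q : Ideal R) (_ : QuasiMax (starF f) Q), locSub Q E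

/-- The `v`-operation `E ↦ (R :_K (R :_K E))`. -/
def vOp (E : Submodule R K) : Submodule R K := 1 / (1 / E)

/-- The `t`-operation: the finite-type operation associated to `v`. -/
def tOp : Submodule R K → Submodule R K := starF (vOp (R := R) (K := K))

/-- `R` is a Prüfer ⋆-multiplication domain: every nonzero finitely generated ideal `F`
is ⋆_f-invertible, i.e. `(F·(R :_K F))^{⋆_f} = R^⋆`. -/
def PSMD (f : Submodule R K → Submodule R K) : Prop :=
  ∀ F : Ideal R, F ≠ ⊥ → F.FG →
    starF f (idealSub F * ((1 : Submodule R K) / idealSub F)) = f 1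

/-- The content ideal of a polynomial: the ideal generated by its coefficients. -/
def contentI (h : Polynomial R) : Ideal R := Ideal.span (Set.range h.coeff)

/-- The Nagata ring `Na(R,⋆) = R[X]_{N(⋆)}`, realized as the subset
`{g/h : g, h ∈ R[X], h ≠ 0, c(h)^⋆ = R^⋆}` of the field `K(X)` of rational functions. -/
def NaSet (f : Submodule R K → Submodule R K) : Set (RatFunc K) :=
  {x | ∃ g h : Polynomial R, h ≠ 0 ∧ f (idealSub (contentI h)) = f 1 ∧
    x * algebraMap (Polynomial K) (RatFunc K) (h.map (algebraMap R K)) =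
      algebraMap (Polynomial K) (RatFunc K) (g.map (algebraMap R K))}

/-- The Nagata ring as a subring of `K(X)` (the set `NaSet` is multiplicatively
saturated, so it coincides with the subring it generates). -/
noncomputable def NaSub (f : Submodule R K → Submodule R K) : Subring (RatFunc K) :=
  Subring.closure (NaSet f)

/-- A subset `S` of `K` is integrally closed (in `K`) if every element of `K` which is a root
of a monic polynomial with coefficients in `S` lies in `S`. -/
def IntClosedSet (S : Set K) : Prop :=
  ∀ x : K, (∃ p : Polynomial K, p.Monic ∧ (∀ n, p.coeff n ∈ S) ∧ p.eval x = 0) → x ∈ S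

/-- A subset `S` of `K` is seminormal if `x² ∈ S` and `x³ ∈ S` imply `x ∈ S`. -/
def SeminormalSet (S : Set K) : Prop := ∀ x : K, x ^ 2 ∈ S → x ^ 3 ∈ S → x ∈ S

/-- `T` is `(f,g)`-linked to `T` (case `D = T` of linkedness). -/
def LinkedSelf (f g : Submodule R K → Submodule R K) : Prop :=
  ∀ G : Ideal R, G ≠ ⊥ → G.FG → f (idealSub G) = f 1 → g (idealSub G) = g 1

end Generic

section Overring

variable {D : Type*} {K : Type*} [CommRing D] [Field K] [Algebra D K]

/-- The `T`-submodule `E·T` of `K` generated by a `D`-submodule `E` of `K`. -/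
def extT (T : Subalgebra D K) (E : Submodule D K) : Submodule ↥T K :=
  Submodule.span ↥T (E : Set K)

/-- `T` is `(⋆,⋆')`-linked to `D`: for every nonzero finitely generated integral ideal `F`
of `D`, `F^⋆ = D^⋆` implies `(FT)^{⋆'} = T^{⋆'}`. -/
def LinkedF (f : Submodule D K → Submodule D K) (T : Subalgebra D K)
    (g : Submodule ↥T K → Submodule ↥T K) : Prop :=
  ∀ F : Ideal D, F ≠ ⊥ → F.FG → f (idealSub F) = f 1 → g (extT T (idealSub F)) = g 1

/-- `T` is `t`-linked to `(D,⋆)`: `T` is `(⋆, t_T)`-linked to `D`. -/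
def TLinked (f : Submodule D K → Submodule D K) (T : Subalgebra D K) : Prop :=
  LinkedF f T (tOp (R := ↥T) (K := K))

/-- The semistar operation `ℓ_{⋆,T}` on `T`:
`E^ℓ = ∩ { E T_{D∖P} : P quasi-⋆_f-prime of D }` (equal to `K` if there are none). -/
def ellOp (f : Submodule D K → Submodule D K) (T : Subalgebra D K)
    (E : Submodule ↥T K) : Submodule ↥T K :=
  ⨅ (P : Ideal D) (_ : QuasiPrime (starF f) P),
    Submodule.span ↥T {x : K | ∃ r : D, r ∉ P ∧ algebraMap D K r * x ∈ E}

/-- The localization `D_P` of `D` at a prime `P`, as a subalgebra of `K`. -/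
def Dloc (P : Ideal D) : Subalgebra D K :=
  Algebra.adjoin D {x : K | ∃ r : D, r ∉ P ∧ algebraMap D K r * x ∈ (⊥ : Subalgebra D K)}

/-- The localization `T_{D∖P}` of an overring `T` at the multiplicative set `D∖P`,
as a subalgebra of `K`. -/
def TlocD (T : Subalgebra D K) (P : Ideal D) : Subalgebra D K :=
  Algebra.adjoin D {x : K | ∃ r : D, r ∉ P ∧ algebraMap D K r * x ∈ T}

/-- The localization `T_Q` of an overring `T` at a prime `Q` of `T`,
as a subalgebra of `K`. -/
def TlocQ (T : Subalgebra D K) (Q : Ideal ↥T) : Subalgebra D K :=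
  Algebra.adjoin D {x : K | ∃ t : ↥T, t ∉ Q ∧ (t : K) * x ∈ T}

/-- `T` is `(⋆,⋆')`-flat over `D`: `T` is `(⋆,⋆')`-linked to `D` and `D_{Q∩D} = T_Q`
for every quasi-⋆'_f-prime `Q` of `T`. -/
def FlatF (f : Submodule D K → Submodule D K) (T : Subalgebra D K)
    (g : Submodule ↥T K → Submodule ↥T K) : Prop :=
  LinkedF f T g ∧
    ∀ Q : Ideal ↥T, QuasiPrime (starF g) Q →
      Dloc (Q.comap (algebraMap D ↥T)) = TlocQ T Q

/-- `B` is a flat `A`-module (for subalgebras `A ⊆ B` of `K`, with the module structure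
coming from the inclusion). -/
def FlatPair (A B : Subalgebra D K) : Prop :=
  ∃ h : A ≤ B, @Module.Flat ↥A ↥B _ _ ((Subalgebra.inclusion h).toRingHom.toModule)

/-- `B` is a flat `A`-module, for subrings `A ⊆ B` of a commutative ring. -/
def FlatSubring {L : Type*} [CommRing L] (A B : Subring L) : Prop :=
  ∃ h : A ≤ B, @Module.Flat ↥A ↥B _ _ ((Subring.inclusion h).toModule)

end Overring

/-! For `x ∈ T^ℓ`, let `I = (T :_D x)`, a nonzero ideal of `D`. If `1 ∉ I^{⋆_f}`, then `I` lies in a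
quasi-`⋆_f`-prime `P`: since `⋆_f` is of finite type, Zorn gives `P ⊇ I` maximal for `1 ∉ P^{⋆_f}`;
maximality makes `P` a quasi-`⋆_f`-ideal, and `P` is prime because `J ↦ 1 ∈ J^{⋆_f}` is an Oka
family. But `x ∈ T_{D∖P}` gives some `r ∉ P` with `rx ∈ T`, i.e. `r ∈ I ⊆ P`, a contradiction.
Otherwise a finitely generated `F ⊆ I` has `F^⋆ = D^⋆`, linkedness gives `(FT)^{⋆'} = T`, and
`xFT ⊆ T` yields `xT = (xFT)^{⋆'} ⊆ T^{⋆'} = T`. -/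

theorem Submodule.FG.exists_le_of_le_sSup {R M : Type*} [Semiring R] [AddCommMonoid M]
    [Module R M] {F : Submodule R M} (hF : F.FG) (hF0 : F ≠ ⊥) {𝒮 : Set (Submodule R M)}
    (h𝒮 : DirectedOn (· ≤ ·) 𝒮) (hF𝒮 : F ≤ sSup 𝒮) : ∃ E ∈ 𝒮, F ≤ E := by
  rcases 𝒮.eq_empty_or_nonempty with rfl | h𝒮ne
  · exact absurd (le_bot_iff.mp (sSup_empty (α := Submodule R M) ▸ hF𝒮)) hF0
  · exact (CompleteLattice.isCompactElement_iff_le_of_directed_sSup_le (k := F)).mp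
      ((F.fg_iff_compact).mp hF) 𝒮 h𝒮ne h𝒮 hF𝒮

section Generic

variable {R K : Type*} [CommRing R] [Field K] [Algebra R K]

theorem Submodule.smul_ne_bot {x : K} (hx : x ≠ 0) {E : Submodule R K} (hE : E ≠ ⊥) :
    x • E ≠ ⊥ := by
  rw [← Submodule.span_singleton_mul]
  simp [Submodule.mul_eq_bot, hx, hE]

theorem Submodule.one_ne_bot : (1 : Submodule R K) ≠ ⊥ :=
  (Submodule.ne_bot_iff _).mpr ⟨1, Submodule.one_le.mp le_rfl, one_ne_zero⟩

theorem starF_mono (f : Submodule R K → Submodule R K) {E E' : Submodule R K} (h : E ≤ E') :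
    starF f E ≤ starF f E' :=
  sSup_le_sSup fun _ ⟨F, hF, hF0, hFE, hG⟩ => ⟨F, hF, hF0, hFE.trans h, hG⟩

theorem le_starF_of_fg (f : Submodule R K → Submodule R K) {E F : Submodule R K} (hF : F.FG)
    (hF0 : F ≠ ⊥) (hFE : F ≤ E) : f F ≤ starF f E :=
  le_sSup ⟨F, hF, hF0, hFE, rfl⟩

theorem idealSub_mono {I J : Ideal R} (h : I ≤ J) : (idealSub I : Submodule R K) ≤ idealSub J :=
  Submodule.map_mono h

theorem idealSub_mul (I J : Ideal R) :
    (idealSub (I * J) : Submodule R K) = idealSub I * idealSub J :=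
  Submodule.map_mul I J (Algebra.ofId R K)

theorem idealSub_sSup (𝒞 : Set (Ideal R)) :
    (idealSub (sSup 𝒞) : Submodule R K) = sSup (idealSub '' 𝒞) := by
  rw [sSup_image]
  exact (Submodule.gc_map_comap _).l_sSup

theorem idealSub_le_one (I : Ideal R) : (idealSub I : Submodule R K) ≤ 1 := by
  rw [Submodule.one_eq_range]
  exact LinearMap.map_le_range

theorem exists_fg_idealSub_eq (h : Function.Injective (algebraMap R K)) {F : Submodule R K}
    (hF : F.FG) (hF1 : F ≤ 1) : ∃ F₀ : Ideal R, F₀.FG ∧ idealSub F₀ = F := by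
  rw [Submodule.one_eq_range] at hF1
  have hmap := Submodule.map_comap_eq_self hF1
  exact ⟨_, Submodule.fg_of_fg_map_injective _ h (hmap ▸ hF), hmap⟩

theorem Ideal.sup_span_singleton_mul_colon_le (I : Ideal R) (a : R) :
    (I ⊔ Ideal.span {a}) * I.colon (Ideal.span {a}) ≤ I := by
  rw [Ideal.sup_mul]
  refine sup_le Ideal.mul_le_left (Ideal.span_singleton_mul_le_iff.mpr fun z hz => ?_)
  rw [mul_comm]
  exact Submodule.mem_colon_span_singleton.mp hz

namespace SemistarOp

variable (s : SemistarOp R K)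

theorem toFun_ne_bot {E : Submodule R K} (hE : E ≠ ⊥) : s.toFun E ≠ ⊥ :=
  ne_bot_of_le_ne_bot hE (s.le_star' E hE)

theorem directedOn_starF (E : Submodule R K) :
    DirectedOn (· ≤ ·) {G | ∃ F : Submodule R K, F.FG ∧ F ≠ ⊥ ∧ F ≤ E ∧ G = s.toFun F} := by
  rintro _ ⟨F₁, hF₁, hF₁0, hF₁E, rfl⟩ _ ⟨F₂, hF₂, hF₂0, hF₂E, rfl⟩
  have hsup : F₁ ⊔ F₂ ≠ ⊥ := ne_bot_of_le_ne_bot hF₁0 le_sup_left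
  exact ⟨_, ⟨F₁ ⊔ F₂, hF₁.sup hF₂, hsup, sup_le hF₁E hF₂E, rfl⟩,
    s.mono' _ _ hF₁0 hsup le_sup_left, s.mono' _ _ hF₂0 hsup le_sup_right⟩

theorem exists_le_toFun_of_le_starF {E F : Submodule R K} (hF : F.FG) (hF0 : F ≠ ⊥)
    (hFE : F ≤ starF s.toFun E) :
    ∃ G : Submodule R K, G.FG ∧ G ≠ ⊥ ∧ G ≤ E ∧ F ≤ s.toFun G := by
  obtain ⟨_, ⟨G, hG, hG0, hGE, rfl⟩, hFG⟩ :=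
    hF.exists_le_of_le_sSup hF0 (s.directedOn_starF E) hFE
  exact ⟨G, hG, hG0, hGE, hFG⟩

theorem mem_starF_iff {E : Submodule R K} {x : K} (hx : x ≠ 0) :
    x ∈ starF s.toFun E ↔ ∃ F : Submodule R K, F.FG ∧ F ≠ ⊥ ∧ F ≤ E ∧ x ∈ s.toFun F := by
  refine ⟨fun h => ?_, fun ⟨F, hF, hF0, hFE, hxF⟩ => le_starF_of_fg _ hF hF0 hFE hxF⟩
  obtain ⟨G, hG, hG0, hGE, hxG⟩ := s.exists_le_toFun_of_le_starF (Submodule.fg_span_singleton x)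
    (by simpa [Submodule.span_singleton_eq_bot]) ((Submodule.span_singleton_le_iff_mem _ _).mpr h)
  exact ⟨G, hG, hG0, hGE, hxG (Submodule.mem_span_singleton_self x)⟩

theorem le_starF (E : Submodule R K) : E ≤ starF s.toFun E := by
  intro x hxE
  rcases eq_or_ne x 0 with rfl | hx
  · exact zero_mem _
  have hx0 : Submodule.span R {x} ≠ ⊥ := by simpa [Submodule.span_singleton_eq_bot]
  exact (s.mem_starF_iff hx).mpr ⟨_, Submodule.fg_span_singleton x, hx0,
    (Submodule.span_singleton_le_iff_mem _ _).mpr hxE,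
    s.le_star' _ hx0 (Submodule.mem_span_singleton_self x)⟩

theorem starF_starF_le (E : Submodule R K) :
    starF s.toFun (starF s.toFun E) ≤ starF s.toFun E := by
  intro x hx
  rcases eq_or_ne x 0 with rfl | hx0
  · exact zero_mem _
  obtain ⟨F, hF, hF0, hFE, hxF⟩ := (s.mem_starF_iff hx0).mp hx
  obtain ⟨G, hG, hG0, hGE, hFG⟩ := s.exists_le_toFun_of_le_starF hF hF0 hFE
  have hsFG : s.toFun F ≤ s.toFun G :=
    s.idem' G hG0 ▸ s.mono' _ _ hF0 (s.toFun_ne_bot hG0) hFG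
  exact le_starF_of_fg _ hG hG0 hGE (hsFG hxF)

theorem mul_mem_toFun {a : K} (ha : a ≠ 0) {E G : Submodule R K} (hE : E ≠ ⊥) (hG : G ≠ ⊥)
    (h : ∀ z ∈ E, a * z ∈ s.toFun G) {y : K} (hy : y ∈ s.toFun E) : a * y ∈ s.toFun G := by
  have haE : a • E ≤ s.toFun G := by
    rintro _ ⟨z, hz, rfl⟩
    exact h z hz
  rw [← s.idem' G hG]
  refine s.mono' _ _ (Submodule.smul_ne_bot ha hE) (s.toFun_ne_bot hG) haE ?_
  rw [s.smul' a ha E hE]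
  exact Submodule.smul_mem_pointwise_smul y a _ hy

theorem mul_toFun_le {F₁ F₂ : Submodule R K} (h₁ : F₁ ≠ ⊥) (h₂ : F₂ ≠ ⊥) :
    s.toFun F₁ * s.toFun F₂ ≤ s.toFun (F₁ * F₂) := by
  have h₁₂ : F₁ * F₂ ≠ ⊥ := by simp [Submodule.mul_eq_bot, h₁, h₂]
  have hleft : ∀ a ∈ F₁, ∀ y ∈ s.toFun F₂, a * y ∈ s.toFun (F₁ * F₂) := by
    intro a ha y hy
    rcases eq_or_ne a 0 with rfl | ha0
    · simp
    exact s.mul_mem_toFun ha0 h₂ h₁₂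
      (fun z hz => s.le_star' _ h₁₂ (Submodule.mul_mem_mul ha hz)) hy
  refine Submodule.mul_le.mpr fun x hx y hy => ?_
  rcases eq_or_ne y 0 with rfl | hy0
  · simp
  rw [mul_comm x y]
  exact s.mul_mem_toFun hy0 h₁ h₁₂ (fun a ha => mul_comm a y ▸ hleft a ha y hy) hx

theorem toFun_eq_toFun_one {F : Submodule R K} (hF0 : F ≠ ⊥) (hF1 : F ≤ 1)
    (h1 : (1 : K) ∈ s.toFun F) : s.toFun F = s.toFun 1 :=
  le_antisymm (s.mono' _ _ hF0 Submodule.one_ne_bot hF1)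
    (s.idem' F hF0 ▸
      s.mono' _ _ Submodule.one_ne_bot (s.toFun_ne_bot hF0) (Submodule.one_le.mpr h1))

theorem mem_one_of_smul_le_one (h1 : s.toFun 1 = 1) {E : Submodule R K} (hE0 : E ≠ ⊥)
    (hE : s.toFun E = 1) {x : K} (hxE : x • E ≤ 1) : x ∈ (1 : Submodule R K) := by
  rcases eq_or_ne x 0 with rfl | hx
  · exact zero_mem _
  have hx1 : x • (1 : Submodule R K) ≤ 1 :=
    calc x • (1 : Submodule R K) = s.toFun (x • E) := by rw [s.smul' x hx E hE0, hE]
      _ ≤ s.toFun 1 := s.mono' _ _ (Submodule.smul_ne_bot hx hE0) Submodule.one_ne_bot hxE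
      _ = 1 := h1
  simpa using hx1 (Submodule.smul_mem_pointwise_smul 1 x _ (Submodule.one_le.mp le_rfl))

theorem isOka_one_mem_starF :
    Ideal.IsOka fun J : Ideal R => (1 : K) ∈ starF s.toFun (idealSub J) where
  top := s.le_starF _ ⟨1, Submodule.mem_top, by simp⟩
  oka {I a} h₁ h₂ := by
    obtain ⟨F₁, hF₁, hF₁0, hF₁I, h1F₁⟩ := (s.mem_starF_iff one_ne_zero).mp h₁
    obtain ⟨F₂, hF₂, hF₂0, hF₂I, h1F₂⟩ := (s.mem_starF_iff one_ne_zero).mp h₂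
    refine (s.mem_starF_iff one_ne_zero).mpr ⟨F₁ * F₂, hF₁.mul hF₂,
      by simp [Submodule.mul_eq_bot, hF₁0, hF₂0], ?_,
      s.mul_toFun_le hF₁0 hF₂0 (by simpa using Submodule.mul_mem_mul h1F₁ h1F₂)⟩
    calc F₁ * F₂ ≤ idealSub (I ⊔ Ideal.span {a}) * idealSub (I.colon (Ideal.span {a})) :=
          mul_le_mul' hF₁I hF₂I
      _ = idealSub ((I ⊔ Ideal.span {a}) * I.colon (Ideal.span {a})) := (idealSub_mul _ _).symm
      _ ≤ idealSub I := idealSub_mono (Ideal.sup_span_singleton_mul_colon_le I a)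

theorem exists_one_mem_starF_of_directedOn {𝒞 : Set (Ideal R)} (h𝒞 : DirectedOn (· ≤ ·) 𝒞)
    (h : (1 : K) ∈ starF s.toFun (idealSub (sSup 𝒞))) :
    ∃ J ∈ 𝒞, (1 : K) ∈ starF s.toFun (idealSub J) := by
  obtain ⟨F, hF, hF0, hF𝒞, h1F⟩ := (s.mem_starF_iff one_ne_zero).mp h
  rw [idealSub_sSup] at hF𝒞
  obtain ⟨_, ⟨J, hJ, rfl⟩, hFJ⟩ := hF.exists_le_of_le_sSup hF0
    (directedOn_image.mpr (h𝒞.mono' fun _ _ _ _ h => idealSub_mono h)) hF𝒞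
  exact ⟨J, hJ, le_starF_of_fg _ hF hF0 hFJ h1F⟩

theorem exists_quasiPrime_le {I : Ideal R} (hI : I ≠ ⊥)
    (h : (1 : K) ∉ starF s.toFun (idealSub I)) :
    ∃ M : Ideal R, QuasiPrime (starF s.toFun) M ∧ I ≤ M := by
  obtain ⟨M, hIM, hM⟩ := zorn_le_nonempty₀ {J : Ideal R | (1 : K) ∉ starF s.toFun (idealSub J)}
    (fun 𝒞 h𝒞 hchain _ _ => ⟨sSup 𝒞, fun h1 =>
      have ⟨J, hJ, h1J⟩ := s.exists_one_mem_starF_of_directedOn hchain.directedOn h1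
      h𝒞 hJ h1J, fun _ => le_sSup⟩) I h
  set c := Submodule.comap (Algebra.linearMap R K) (starF s.toFun (idealSub M))
  have hMc : M ≤ c := (Submodule.le_comap_map _ _).trans (Submodule.comap_mono (s.le_starF _))
  have hc : (1 : K) ∉ starF s.toFun (idealSub c) := fun h1 =>
    hM.prop (s.starF_starF_le _ (starF_mono _ (Submodule.map_comap_le _ _) h1))
  exact ⟨M, ⟨⟨ne_bot_of_le_ne_bot hI hIM, le_antisymm (hM.le_of_ge hc hMc) hMc⟩,
    s.isOka_one_mem_starF.isPrime_of_maximal_not hM⟩, hIM⟩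

end SemistarOp

end Generic

section Overring

variable {D K : Type*} [CommRing D] [Field K] [Algebra D K]

theorem exists_notMem_mul_mem_of_mem_span {T : Subalgebra D K} {P : Ideal D} (hP : P.IsPrime)
    {E : Submodule T K} {x : K}
    (hx : x ∈ Submodule.span T {y : K | ∃ r : D, r ∉ P ∧ algebraMap D K r * y ∈ E}) :
    ∃ r : D, r ∉ P ∧ algebraMap D K r * x ∈ E := by
  induction hx using Submodule.span_induction with
  | mem y hy => exact hy
  | zero => exact ⟨1, P.ne_top_iff_one.mp hP.ne_top, by simp⟩
  | add y z _ _ hy hz =>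
    obtain ⟨r, hr, hry⟩ := hy
    obtain ⟨t, ht, htz⟩ := hz
    refine ⟨r * t, hP.mul_notMem hr ht, ?_⟩
    convert E.add_mem (E.smul_of_tower_mem t hry) (E.smul_of_tower_mem r htz) using 1
    simp only [Algebra.smul_def, map_mul]
    ring
  | smul a y _ hy =>
    obtain ⟨r, hr, hry⟩ := hy
    refine ⟨r, hr, ?_⟩
    convert E.smul_mem a hry using 1
    simp only [Algebra.smul_def]
    ring

theorem mem_ellOp_iff (f : Submodule D K → Submodule D K) (T : Subalgebra D K)
    (E : Submodule T K) {x : K} :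
    x ∈ ellOp f T E ↔
      ∀ P : Ideal D, QuasiPrime (starF f) P → ∃ r : D, r ∉ P ∧ algebraMap D K r * x ∈ E := by
  simp only [ellOp, Submodule.mem_iInf]
  exact forall₂_congr fun P hP =>
    ⟨exists_notMem_mul_mem_of_mem_span hP.2, fun h => Submodule.subset_span h⟩

theorem le_ellOp (f : Submodule D K → Submodule D K) (T : Subalgebra D K) (E : Submodule T K) :
    E ≤ ellOp f T E := fun x hx =>
  (mem_ellOp_iff f T E).mpr fun P hP => ⟨1, P.ne_top_iff_one.mp hP.2.ne_top, by simpa using hx⟩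

theorem colon_one_ne_bot [Nontrivial D] [IsFractionRing D K] (T : Subalgebra D K) (x : K) :
    ((1 : Submodule T K).restrictScalars D).colon {x} ≠ ⊥ := by
  obtain ⟨⟨n, d⟩, hnd⟩ := IsLocalization.surj (nonZeroDivisors D) x
  refine (Submodule.ne_bot_iff _).mpr ⟨d, Submodule.mem_colon_singleton.mpr ?_,
    nonZeroDivisors.coe_ne_zero d⟩
  rw [Submodule.restrictScalars_mem, Algebra.smul_def, mul_comm, hnd,
    IsScalarTower.algebraMap_apply D T K]
  exact Submodule.algebraMap_mem _

theorem mem_one_of_one_mem_starF_colon (s : SemistarOp D K) (T : Subalgebra D K)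
    (s' : SemistarOp T K) (hstar : s'.toFun 1 = 1) (hlinked : LinkedF s.toFun T s'.toFun)
    (hinj : Function.Injective (algebraMap D K)) {x : K}
    (h : (1 : K) ∈ starF s.toFun (idealSub (((1 : Submodule T K).restrictScalars D).colon {x}))) :
    x ∈ (1 : Submodule T K) := by
  obtain ⟨F, hF, hF0, hFx, h1F⟩ := (s.mem_starF_iff one_ne_zero).mp h
  obtain ⟨F₀, hF₀, rfl⟩ := exists_fg_idealSub_eq hinj hF (hFx.trans (idealSub_le_one _))
  have hF₀0 : F₀ ≠ ⊥ := by
    rintro rfl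
    exact hF0 (Submodule.map_bot _)
  have hG : s'.toFun (extT T (idealSub F₀)) = 1 := by
    rw [hlinked F₀ hF₀0 hF₀ (s.toFun_eq_toFun_one hF0 (idealSub_le_one _) h1F), hstar]
  have hG0 : extT T (idealSub F₀) ≠ ⊥ := by
    obtain ⟨y, hy, hy0⟩ := (Submodule.ne_bot_iff _).mp hF0
    exact (Submodule.ne_bot_iff _).mpr ⟨y, Submodule.subset_span hy, hy0⟩
  refine s'.mem_one_of_smul_le_one hstar hG0 hG ?_
  rw [extT, Submodule.smul_span, Submodule.span_le]
  rintro _ ⟨_, hz, rfl⟩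
  obtain ⟨d, hd, rfl⟩ := hFx hz
  simpa [Algebra.smul_def, mul_comm] using Submodule.mem_colon_singleton.mp hd

end Overring

/-- **Lemma 3.11.** If `⋆'` is a (semi)star operation on `T` (i.e. `T^{⋆'} = T`) and `T` is
`(⋆,⋆')`-linked to `D`, then `T^{ℓ_{⋆,T}} = T`. -/
theorem ellOp_one_eq_one_of_linked
    {D K : Type*} [CommRing D] [IsDomain D] [Field K] [Algebra D K] [IsFractionRing D K]
    (s : SemistarOp D K) (T : Subalgebra D K) (s' : SemistarOp ↥T K)
    (hstar : s'.toFun 1 = 1)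
    (hlinked : LinkedF s.toFun T s'.toFun) :
    ellOp s.toFun T 1 = 1 := by
  refine le_antisymm (fun x hx => ?_) (le_ellOp _ _ _)
  by_cases h1 :
      (1 : K) ∈ starF s.toFun (idealSub (((1 : Submodule T K).restrictScalars D).colon {x}))
  · exact mem_one_of_one_mem_starF_colon s T s' hstar hlinked (IsFractionRing.injective D K) h1
  · obtain ⟨M, hM, hxM⟩ := s.exists_quasiPrime_le (colon_one_ne_bot T x) h1
    obtain ⟨r, hrM, hrx⟩ := (mem_ellOp_iff _ _ _).mp hx M hM
    exact absurd (hxM <| Submodule.mem_colon_singleton.mpr <| by simpa [Algebra.smul_def] using hrx)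
      hrM
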